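/- Let G be a Δ-regular finite simple graph of order n ≥ 1. Then 1 ≤ A_Δ(G) ≤ n/(Δ+1). Furthermore, G is connected if and only if A_Δ(G) = 1. -/

import Mathlib

/-! In a `Δ`-regular graph `δ_S(v) - δ_{S̄}(v) ≤ Δ`, with equality exactly when `v` has no
neighbour outside `S`. So the exact defensive `Δ`-alliances are the connected vertex sets closed
under adjacency, i.e. the vertex sets of the connected components, and `A_Δ(G)` is the number of
components. Each component contains a vertex together with its `Δ` neighbours, so there are at
most `n / (Δ + 1)` of them. -/

open Polynomial Finset

/-- Number of neighbors of `v` inside the set `S` (denoted δ_S(v)). -/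
def SimpleGraph.degIn {V : Type*} [Fintype V] [DecidableEq V]
    (G : SimpleGraph V) [DecidableRel G.Adj] (S : Finset V) (v : V) : ℕ :=
  (S.filter (fun u => G.Adj v u)).card

/-- Number of neighbors of `v` outside the set `S` (denoted δ_{S̄}(v)). -/
def SimpleGraph.degOut {V : Type*} [Fintype V] [DecidableEq V]
    (G : SimpleGraph V) [DecidableRel G.Adj] (S : Finset V) (v : V) : ℕ :=
  (Sᶜ.filter (fun u => G.Adj v u)).card

/-- `S` is an exact defensive `k`-alliance in `G`: the induced subgraph `⟨S⟩` is connected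
(in particular `S` is nonempty) and `k = k_S = min_{v ∈ S} (δ_S(v) - δ_{S̄}(v))`. -/
def SimpleGraph.IsExactAlliance {V : Type*} [Fintype V] [DecidableEq V]
    (G : SimpleGraph V) [DecidableRel G.Adj] (S : Finset V) (k : ℤ) : Prop :=
  (G.induce (S : Set V)).Connected ∧
    (∀ v ∈ S, k ≤ (G.degIn S v : ℤ) - (G.degOut S v : ℤ)) ∧
    (∃ v ∈ S, (G.degIn S v : ℤ) - (G.degOut S v : ℤ) = k)

/-- `A_k(G)`: the number of exact defensive `k`-alliances in `G`. -/
noncomputable def SimpleGraph.allianceCoeff {V : Type*} [Fintype V] [DecidableEq V]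
    (G : SimpleGraph V) [DecidableRel G.Adj] (k : ℤ) : ℕ :=
  Set.ncard {S : Finset V | G.IsExactAlliance S k}

/-- The alliance polynomial `A(G;x) = Σ_{k=-Δ}^{Δ} A_k(G) x^{n+k}`, where `n` is the order and
`Δ` the maximum degree of `G`, regarded as a real polynomial. -/
noncomputable def SimpleGraph.alliancePoly {V : Type*} [Fintype V] [DecidableEq V]
    (G : SimpleGraph V) [DecidableRel G.Adj] : Polynomial ℝ :=
  ∑ k ∈ Finset.Icc (-(G.maxDegree : ℤ)) (G.maxDegree : ℤ),
    (G.allianceCoeff k : ℝ) • X ^ (((Fintype.card V : ℤ) + k).toNat)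

namespace SimpleGraph

section Components

variable {V : Type*} {G : SimpleGraph V}

lemma mem_of_reachable_of_forall_adj_mem {s : Set V}
    (hs : ∀ u ∈ s, ∀ v, G.Adj u v → v ∈ s) {u v : V} (h : G.Reachable u v) (hu : u ∈ s) :
    v ∈ s := by
  obtain ⟨p⟩ := h
  induction p with
  | nil => exact hu
  | cons hadj _ ih => exact ih (hs _ hu _ hadj)

lemma connected_induce_and_forall_adj_mem_iff (s : Set V) :
    ((G.induce s).Connected ∧ ∀ u ∈ s, ∀ v, G.Adj u v → v ∈ s) ↔
      ∃ C : G.ConnectedComponent, C.supp = s := by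
  constructor
  · rintro ⟨hconn, hs⟩
    obtain ⟨⟨v, hv⟩⟩ := hconn.nonempty
    refine ⟨G.connectedComponentMk v, Set.ext fun u => ⟨fun hu => ?_, fun hu => ?_⟩⟩
    · exact mem_of_reachable_of_forall_adj_mem hs (ConnectedComponent.exact hu).symm hv
    · exact ConnectedComponent.sound <|
        (hconn.preconnected ⟨u, hu⟩ ⟨v, hv⟩).map (Embedding.induce s).toHom
  · rintro ⟨C, rfl⟩
    exact ⟨C.connected_toSimpleGraph, fun u hu v => C.mem_supp_of_adj_mem_supp hu⟩

lemma connected_iff_card_connectedComponent_eq_one :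
    G.Connected ↔ Nat.card G.ConnectedComponent = 1 := by
  rw [connected_iff, Nat.card_eq_one_iff_unique]
  refine and_congr ⟨Preconnected.subsingleton_connectedComponent, fun _ u v => ?_⟩
    ⟨fun ⟨v⟩ => ⟨G.connectedComponentMk v⟩, fun ⟨C⟩ => ⟨C.out⟩⟩
  exact ConnectedComponent.exact (Subsingleton.elim _ _)

variable [Fintype V]

lemma sum_ncard_supp_connectedComponent [Fintype G.ConnectedComponent] :
    ∑ C : G.ConnectedComponent, C.supp.ncard = Fintype.card V := by
  classical
  rw [← Finset.card_univ, Finset.card_eq_sum_card_fiberwise (f := G.connectedComponentMk)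
    (t := Finset.univ) (fun _ _ => Finset.mem_univ _)]
  refine Finset.sum_congr rfl fun C _ => ?_
  rw [← Set.ncard_coe_finset]
  congr 1
  ext v
  simp [ConnectedComponent.mem_supp_iff]

variable [DecidableRel G.Adj]

lemma ConnectedComponent.degree_add_one_le_ncard_supp {C : G.ConnectedComponent} {v : V}
    (hv : v ∈ C.supp) : G.degree v + 1 ≤ C.supp.ncard := by
  classical
  rw [← card_neighborFinset_eq_degree, ← Finset.card_insert_of_notMem (a := v) (by simp),
    ← Set.ncard_coe_finset]
  refine Set.ncard_le_ncard (fun u hu => ?_) (Set.toFinite _)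
  rw [Finset.coe_insert, Set.mem_insert_iff, coe_neighborFinset, mem_neighborSet] at hu
  rcases hu with rfl | hadj
  · exact hv
  · exact C.mem_supp_of_adj_mem_supp hv hadj

lemma card_connectedComponent_mul_le_card {d : ℕ} (hd : ∀ v, d ≤ G.degree v) :
    Nat.card G.ConnectedComponent * (d + 1) ≤ Fintype.card V := by
  classical
  calc Nat.card G.ConnectedComponent * (d + 1)
      = ∑ _C : G.ConnectedComponent, (d + 1) := by simp
    _ ≤ ∑ C : G.ConnectedComponent, C.supp.ncard := Finset.sum_le_sum fun C _ =>
        (Nat.add_le_add_right (hd C.out) 1).trans (C.degree_add_one_le_ncard_supp C.out_eq)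
    _ = Fintype.card V := sum_ncard_supp_connectedComponent

end Components

section Alliances

variable {V : Type*} [Fintype V] [DecidableEq V] {G : SimpleGraph V} [DecidableRel G.Adj]

lemma degIn_add_degOut (S : Finset V) (v : V) : G.degIn S v + G.degOut S v = G.degree v := by
  rw [degIn, degOut, ← Finset.card_union_of_disjoint
    (Finset.disjoint_filter_filter disjoint_compl_right), ← Finset.filter_union,
    Finset.union_compl, degree, neighborFinset_eq_filter]

lemma degOut_eq_zero_iff {S : Finset V} {v : V} :
    G.degOut S v = 0 ↔ ∀ u, G.Adj v u → u ∈ S := by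
  simp only [degOut, Finset.card_eq_zero, Finset.filter_eq_empty_iff, Finset.mem_compl]
  exact ⟨fun h u hadj => by_contra fun hu => h hu hadj, fun h u hu hadj => hu (h u hadj)⟩

lemma IsRegularOfDegree.isExactAlliance_iff {Δ : ℕ} (hreg : G.IsRegularOfDegree Δ)
    (S : Finset V) :
    G.IsExactAlliance S Δ ↔ (G.induce (S : Set V)).Connected ∧ ∀ v ∈ S, G.degOut S v = 0 := by
  have hsum (v : V) : G.degIn S v + G.degOut S v = Δ := (degIn_add_degOut S v).trans (hreg v)
  constructor
  · rintro ⟨hconn, hmin, -⟩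
    exact ⟨hconn, fun v hv => by have := hmin v hv; have := hsum v; omega⟩
  · rintro ⟨hconn, hout⟩
    have hexact (v : V) (hv : v ∈ S) : (G.degIn S v : ℤ) - G.degOut S v = Δ := by
      have := hout v hv; have := hsum v; omega
    obtain ⟨⟨v, hv⟩⟩ := hconn.nonempty
    exact ⟨hconn, fun v hv => (hexact v hv).ge, v, hv, hexact v hv⟩

lemma IsRegularOfDegree.isExactAlliance_iff_exists_supp_eq {Δ : ℕ}
    (hreg : G.IsRegularOfDegree Δ) (S : Finset V) :
    G.IsExactAlliance S Δ ↔ ∃ C : G.ConnectedComponent, C.supp = S := by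
  simp only [hreg.isExactAlliance_iff, degOut_eq_zero_iff,
    ← connected_induce_and_forall_adj_mem_iff, Finset.mem_coe]

lemma IsRegularOfDegree.allianceCoeff_eq_card_connectedComponent {Δ : ℕ}
    (hreg : G.IsRegularOfDegree Δ) :
    G.allianceCoeff Δ = Nat.card G.ConnectedComponent := by
  have hset : {S : Finset V | G.IsExactAlliance S Δ} =
      Set.range fun C : G.ConnectedComponent => C.supp.toFinset := by
    ext S
    simp only [Set.mem_ofPred_eq, Set.mem_range, hreg.isExactAlliance_iff_exists_supp_eq,
      ← Finset.coe_inj, Set.coe_toFinset]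
  rw [allianceCoeff, hset, Set.ncard_range_of_injective]
  exact fun C D h => ConnectedComponent.supp_injective (Set.toFinset_inj.mp h)

end Alliances

end SimpleGraph

/-- For a Δ-regular graph of order `n ≥ 1`, `1 ≤ A_Δ(G) ≤ n/(Δ+1)`, and `G` is
connected iff `A_Δ(G) = 1`. -/
theorem allianceCoeff_maxDeg_bounds_and_connected_iff
    {V : Type*} [Fintype V] [DecidableEq V] [Nonempty V]
    (G : SimpleGraph V) [DecidableRel G.Adj] (Δ : ℕ)
    (hreg : G.IsRegularOfDegree Δ) :
    (1 ≤ G.allianceCoeff (Δ : ℤ) ∧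
      (G.allianceCoeff (Δ : ℤ) : ℚ) ≤ (Fintype.card V : ℚ) / ((Δ : ℚ) + 1)) ∧
    (G.Connected ↔ G.allianceCoeff (Δ : ℤ) = 1) := by
  rw [hreg.allianceCoeff_eq_card_connectedComponent,
    ← SimpleGraph.connected_iff_card_connectedComponent_eq_one]
  have hmul : (Nat.card G.ConnectedComponent * (Δ + 1) : ℚ) ≤ Fintype.card V := by
    exact_mod_cast G.card_connectedComponent_mul_le_card fun v => (hreg v).ge
  refine ⟨⟨Nat.card_pos, ?_⟩, Iff.rfl⟩
  rwa [le_div_iff₀ (by positivity)]
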